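/- arXiv:1011.2722 — 2 statements merged into one kernel-verified Lean document; each statement's English description precedes it below -/
import Mathlib

section
/- Let V be a real vector space with a quadratic form Q, let Cl(Q) denote the Clifford algebra of Q, and let S be a module over Cl(Q); write v • s for the Clifford multiplication of a spinor s ∈ S by the image ι(v) of a vector v ∈ V. Let β : S → S → ℝ be an ℝ-bilinear form which is left-separating (β(t, s') = 0 for all s' ∈ S implies t = 0). Suppose C : S → S is an ℝ-linear map such that for all v ∈ V and all s, s' ∈ S one has β(v • C(s), s') + β(v • s, C(s')) = 0 and β(C(v • s), s') + β(v • s, C(s')) = 0. If moreover there exists a vector v₀ ∈ V with Q(v₀) ≠ 0, then C is β-skew-adjoint: β(C(t), s') + β(t, C(s')) = 0 for all t, s' ∈ S. -/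
/-- Under the same hypotheses as Statement 0, if moreover there is a
vector `v₀` with `Q v₀ ≠ 0`, then `C` is `β`-skew-adjoint. -/
theorem clifford_skew_adjoint_of_bilinear_conditions
    {V : Type*} [AddCommGroup V] [Module ℝ V] (Q : QuadraticForm ℝ V)
    {S : Type*} [AddCommGroup S] [Module ℝ S]
    [Module (CliffordAlgebra Q) S] [IsScalarTower ℝ (CliffordAlgebra Q) S]
    (β : S →ₗ[ℝ] S →ₗ[ℝ] ℝ)
    (hsep : ∀ t : S, (∀ s' : S, β t s' = 0) → t = 0)
    (C : S →ₗ[ℝ] S)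
    (h1 : ∀ (v : V) (s s' : S),
      β (CliffordAlgebra.ι Q v • C s) s' + β (CliffordAlgebra.ι Q v • s) (C s') = 0)
    (h2 : ∀ (v : V) (s s' : S),
      β (C (CliffordAlgebra.ι Q v • s)) s' + β (CliffordAlgebra.ι Q v • s) (C s') = 0)
    (hv₀ : ∃ v₀ : V, Q v₀ ≠ 0) :
    ∀ (t s' : S), β (C t) s' + β t (C s') = 0 := by
  obtain ⟨v₀, hQ⟩ := hv₀
  intro t s'
  -- write t = ι v₀ • s
  set s : S := (Q v₀)⁻¹ • (CliffordAlgebra.ι Q v₀ • t) with hs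
  have hts : CliffordAlgebra.ι Q v₀ • s = t := by
    rw [hs, smul_comm, ← mul_smul, CliffordAlgebra.ι_sq_scalar,
      algebraMap_smul, smul_smul, inv_mul_cancel₀ hQ, one_smul]
  -- C commutes with ι v₀ • on s
  have hC : C (CliffordAlgebra.ι Q v₀ • s) = CliffordAlgebra.ι Q v₀ • C s := by
    apply eq_of_sub_eq_zero
    apply hsep
    intro u
    have := h1 v₀ s u
    have := h2 v₀ s u
    simp only [map_sub, LinearMap.sub_apply]
    linarith
  calc β (C t) s' + β t (C s')
      = β (CliffordAlgebra.ι Q v₀ • C s) s' + β (CliffordAlgebra.ι Q v₀ • s) (C s') := by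
        rw [← hts, hC]
    _ = 0 := h1 v₀ s s'
end

section
/- Let σ₁ = [[0,1],[1,0]], σ₂ = [[0,−i],[i,0]], σ₃ = [[1,0],[0,−1]] be the Pauli matrices in Matrix (Fin 2) (Fin 2) ℂ, define the Dirac matrices Γ₀ = [[0, I],[I, 0]] and Γ_k = [[0, σ_k],[−σ_k, 0]] (k = 1, 2, 3) in Matrix (Fin 4) (Fin 4) ℂ, I being the 2×2 identity, and set Γ₅ := i Γ₀ Γ₁ Γ₂ Γ₃ and C := −i Γ₀ Γ₂. Let S⁺ := {s ∈ ℂ⁴ : Γ₅ s = −s} and S⁻ := {s ∈ ℂ⁴ : Γ₅ s = s} be the Γ₅-eigenspaces. Then (1) the eigenspaces are mutually ω-orthogonal for ω(s, s') = sᵀ C s': if s ∈ S⁺ and s' ∈ S⁻ then sᵀ C s' = 0 and s'ᵀ C s = 0; and (2) each eigenspace is isotropic for β₃(s, s') = Re(conj(s)ᵀ Γ₀ s'): if s, s' both lie in S⁺, or both lie in S⁻, then β₃(s, s') = 0. -/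
open Matrix

/-- The Pauli matrices. -/
noncomputable def pauli : Fin 3 → Matrix (Fin 2) (Fin 2) ℂ :=
  ![!![0, 1; 1, 0], !![0, -Complex.I; Complex.I, 0], !![1, 0; 0, -1]]

/-- Assemble a `4 × 4` matrix out of four `2 × 2` blocks. -/
noncomputable def blocks4 (A B C D : Matrix (Fin 2) (Fin 2) ℂ) :
    Matrix (Fin 4) (Fin 4) ℂ :=
  (Matrix.reindex (finSumFinEquiv (m := 2) (n := 2)) (finSumFinEquiv (m := 2) (n := 2)))
    (fromBlocks A B C D)

/-- The Dirac matrices `Γ₀, Γ₁, Γ₂, Γ₃`, as block matrices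
`Γ₀ = [[0, I],[I, 0]]`, `Γ_k = [[0, σ_k],[−σ_k, 0]]`. -/
noncomputable def Γ : Fin 4 → Matrix (Fin 4) (Fin 4) ℂ :=
  ![blocks4 0 1 1 0,
    blocks4 0 (pauli 0) (-(pauli 0)) 0,
    blocks4 0 (pauli 1) (-(pauli 1)) 0,
    blocks4 0 (pauli 2) (-(pauli 2)) 0]

/-- The chirality matrix `Γ₅ = i Γ₀ Γ₁ Γ₂ Γ₃`. -/
noncomputable def Γ₅ : Matrix (Fin 4) (Fin 4) ℂ :=
  Complex.I • (Γ 0 * Γ 1 * Γ 2 * Γ 3)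

/-- The charge conjugation matrix `C = −i Γ₀ Γ₂`. -/
noncomputable def chargeConj : Matrix (Fin 4) (Fin 4) ℂ :=
  (-Complex.I) • (Γ 0 * Γ 2)

/-- The bilinear form `ω(s, s') = sᵀ C s'`. -/
noncomputable def ω (s s' : Fin 4 → ℂ) : ℂ :=
  s ⬝ᵥ chargeConj.mulVec s'

/-- The real bilinear form `β₃(s, s') = Re(conj(s)ᵀ Γ₀ s')`. -/
noncomputable def β₃ (s s' : Fin 4 → ℂ) : ℝ :=
  (star s ⬝ᵥ (Γ 0).mulVec s').re

/-! In the chiral basis `Γ₅ = diag(-1, -1, 1, 1)`. The charge conjugation matrix is block diagonal,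
so it commutes with `Γ₅ = Γ₅ᵀ`, while `Γ₀` is block off-diagonal and anticommutes with `Γ₅ = Γ₅ᴴ`.
Moving `Γ₅` across the pairing then gives `-ω(s, s') = ω(s, s')` for `s ∈ S⁺`, `s' ∈ S⁻`, and
`λ ⟨s, Γ₀ s'⟩ = -λ ⟨s, Γ₀ s'⟩` for `s, s'` in the same eigenspace with the real eigenvalue `λ = ±1`. -/

section EigenvectorOrthogonality

variable {K n : Type*} [Fintype n] {A B : Matrix n n K} {μ ν : K} {s t : n → K}

theorem dotProduct_mulVec_eq_zero_of_transpose_mul_eq [CommRing K] [IsDomain K]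
    (hAB : Aᵀ * B = B * A) (hμν : μ ≠ ν) (hs : A *ᵥ s = μ • s) (ht : A *ᵥ t = ν • t) :
    s ⬝ᵥ B *ᵥ t = 0 := by
  have key : μ * (s ⬝ᵥ B *ᵥ t) = ν * (s ⬝ᵥ B *ᵥ t) :=
    calc μ * (s ⬝ᵥ B *ᵥ t) = A *ᵥ s ⬝ᵥ B *ᵥ t := by rw [hs, smul_dotProduct, smul_eq_mul]
      _ = s ⬝ᵥ (Aᵀ * B) *ᵥ t := by rw [← vecMul_transpose, ← dotProduct_mulVec, mulVec_mulVec]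
      _ = s ⬝ᵥ B *ᵥ (A *ᵥ t) := by rw [hAB, mulVec_mulVec]
      _ = ν * (s ⬝ᵥ B *ᵥ t) := by rw [ht, mulVec_smul, dotProduct_smul, smul_eq_mul]
  exact (mul_eq_mul_right_iff.1 key).resolve_left hμν

theorem star_dotProduct_mulVec_eq_zero_of_conjTranspose_mul_eq_neg [CommRing K] [IsDomain K]
    [StarRing K] (hAB : Aᴴ * B = -(B * A)) (hμν : star μ ≠ -ν) (hs : A *ᵥ s = μ • s)
    (ht : A *ᵥ t = ν • t) : star s ⬝ᵥ B *ᵥ t = 0 := by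
  have key : star μ * (star s ⬝ᵥ B *ᵥ t) = -ν * (star s ⬝ᵥ B *ᵥ t) :=
    calc star μ * (star s ⬝ᵥ B *ᵥ t) = star (A *ᵥ s) ⬝ᵥ B *ᵥ t := by
          rw [hs, star_smul, smul_dotProduct, smul_eq_mul]
      _ = star s ⬝ᵥ (Aᴴ * B) *ᵥ t := by rw [star_mulVec, ← dotProduct_mulVec, mulVec_mulVec]
      _ = -(star s ⬝ᵥ B *ᵥ (A *ᵥ t)) := by rw [hAB, neg_mulVec, dotProduct_neg, mulVec_mulVec]
      _ = -ν * (star s ⬝ᵥ B *ᵥ t) := by rw [ht, mulVec_smul, dotProduct_smul, smul_eq_mul, neg_mul]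
  exact (mul_eq_mul_right_iff.1 key).resolve_left hμν

end EigenvectorOrthogonality

section Blocks

variable (A B C D A' B' C' D' : Matrix (Fin 2) (Fin 2) ℂ)

theorem blocks4_mul_blocks4 :
    blocks4 A B C D * blocks4 A' B' C' D' =
      blocks4 (A * A' + B * C') (A * B' + B * D') (C * A' + D * C') (C * B' + D * D') := by
  simp only [blocks4, reindex_apply, submatrix_mul_equiv, fromBlocks_multiply]

theorem blocks4_transpose : (blocks4 A B C D)ᵀ = blocks4 Aᵀ Cᵀ Bᵀ Dᵀ := by
  simp only [blocks4, reindex_apply, transpose_submatrix, fromBlocks_transpose]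

theorem blocks4_conjTranspose : (blocks4 A B C D)ᴴ = blocks4 Aᴴ Cᴴ Bᴴ Dᴴ := by
  simp only [blocks4, reindex_apply, conjTranspose_submatrix, fromBlocks_conjTranspose]

theorem smul_blocks4 (c : ℂ) : c • blocks4 A B C D = blocks4 (c • A) (c • B) (c • C) (c • D) := by
  rw [blocks4, blocks4, ← fromBlocks_smul]
  rfl

theorem neg_blocks4 : -blocks4 A B C D = blocks4 (-A) (-B) (-C) (-D) := by
  rw [blocks4, blocks4, ← fromBlocks_neg]
  rfl

end Blocks

theorem pauli_mul_pauli_mul_pauli : pauli 0 * pauli 1 * pauli 2 = Complex.I • 1 := by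
  ext i j
  fin_cases i <;> fin_cases j <;> simp [pauli, Matrix.mul_apply, Fin.sum_univ_two]

theorem Γ₅_eq : Γ₅ = blocks4 (-1) 0 0 1 := by
  have h0123 : Γ 0 * Γ 1 * Γ 2 * Γ 3 =
      blocks4 (pauli 0 * pauli 1 * pauli 2) 0 0 (-(pauli 0 * pauli 1 * pauli 2)) := by
    simp [Γ, blocks4_mul_blocks4, Matrix.mul_assoc]
  rw [Γ₅, h0123, pauli_mul_pauli_mul_pauli, smul_blocks4]
  simp [smul_smul]

theorem chargeConj_eq :
    chargeConj = blocks4 (Complex.I • pauli 1) 0 0 (-(Complex.I • pauli 1)) := by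
  simp [chargeConj, Γ, blocks4_mul_blocks4, smul_blocks4, neg_blocks4]

theorem Γ₅_transpose_mul_chargeConj : Γ₅ᵀ * chargeConj = chargeConj * Γ₅ := by
  simp [Γ₅_eq, chargeConj_eq, blocks4_transpose, blocks4_mul_blocks4]

theorem Γ₅_conjTranspose_mul_Γ_zero : Γ₅ᴴ * Γ 0 = -(Γ 0 * Γ₅) := by
  simp [Γ₅_eq, Γ, blocks4_conjTranspose, blocks4_mul_blocks4, neg_blocks4]

/-- The Weyl spinor eigenspaces `S⁺ = ker(Γ₅ + 1)`, `S⁻ = ker(Γ₅ - 1)`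
are mutually `ω`-orthogonal and both `β₃`-isotropic. -/
theorem weyl_eigenspaces_orthogonality :
    (∀ s s' : Fin 4 → ℂ, Γ₅.mulVec s = -s → Γ₅.mulVec s' = s' →
      ω s s' = 0 ∧ ω s' s = 0) ∧
    (∀ s s' : Fin 4 → ℂ, Γ₅.mulVec s = -s → Γ₅.mulVec s' = -s' → β₃ s s' = 0) ∧
    (∀ s s' : Fin 4 → ℂ, Γ₅.mulVec s = s → Γ₅.mulVec s' = s' → β₃ s s' = 0) := by
  have hω {μ ν : ℂ} (hμν : μ ≠ ν) {s s' : Fin 4 → ℂ} (hs : Γ₅ *ᵥ s = μ • s)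
      (hs' : Γ₅ *ᵥ s' = ν • s') : ω s s' = 0 :=
    dotProduct_mulVec_eq_zero_of_transpose_mul_eq Γ₅_transpose_mul_chargeConj hμν hs hs'
  have hβ {μ : ℂ} (hμ : star μ ≠ -μ) {s s' : Fin 4 → ℂ} (hs : Γ₅ *ᵥ s = μ • s)
      (hs' : Γ₅ *ᵥ s' = μ • s') : β₃ s s' = 0 := by
    rw [β₃, star_dotProduct_mulVec_eq_zero_of_conjTranspose_mul_eq_neg
      Γ₅_conjTranspose_mul_Γ_zero hμ hs hs', Complex.zero_re]
  have hneg {s : Fin 4 → ℂ} (hs : Γ₅ *ᵥ s = -s) : Γ₅ *ᵥ s = (-1 : ℂ) • s := by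
    rwa [neg_one_smul]
  have hpos {s : Fin 4 → ℂ} (hs : Γ₅ *ᵥ s = s) : Γ₅ *ᵥ s = (1 : ℂ) • s := by
    rwa [one_smul]
  refine ⟨fun s s' hs hs' => ⟨?_, ?_⟩, fun s s' hs hs' => ?_, fun s s' hs hs' => ?_⟩
  · exact hω (by norm_num) (hneg hs) (hpos hs')
  · exact hω (by norm_num) (hpos hs') (hneg hs)
  · exact hβ (by norm_num) (hneg hs) (hneg hs')
  · exact hβ (by norm_num) (hpos hs) (hpos hs')
end
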